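/- arXiv:math/0611203 — 4 statements merged into one kernel-verified Lean document; each statement's English description precedes it below -/
import Mathlib

section
/- If ξ is a real number and p, q are integers with q > 0, gcd(p,q) = 1, and |ξ - p/q| < 1/(2q²), then p/q is a convergent of the continued fraction expansion of ξ. -/
theorem legendre_criterion_convergent (ξ : ℝ) (p q : ℤ) (hq : 0 < q)
    (hcop : Int.gcd p q = 1)
    (h : |ξ - (p : ℝ) / q| < 1 / (2 * (q : ℝ) ^ 2)) :
    ∃ n : ℕ, (p : ℝ) / q = (GenContFract.of ξ).convs n := by
  set r : ℚ := p / q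
  have hr : (r : ℝ) = p / q := by push_cast [r]; rfl
  have hden : ((r.den : ℤ) : ℝ) = q := congrArg _ (Rat.den_div_eq_of_coprime hq hcop)
  rw [Int.cast_natCast] at hden
  obtain ⟨n, hn⟩ := Real.exists_convs_eq_rat (ξ := ξ) (q := r) (by rwa [hr, hden])
  exact ⟨n, hr ▸ hn.symm⟩
end

section
/- (Sharp/Popoviciu symmetry) Let r, s be coprime positive integers and let R(n) denote the number of representations n = r x + s y with nonnegative integers x, y. Then for every integer n with 0 < n < rs and n not divisible by r or by s, R(n) + R(rs - n) = 1. -/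
/-!
A representation `m = r x + s y` with `m < r s` has `x < s`, and since `r` is invertible
modulo `s`, `x` must be the least residue `x₀` of `m / r` modulo `s`; so `R(m) = 1` exactly when
`r x₀ ≤ m`. The residue for `n` is some `0 < x₀ < s` (as `s ∤ n`), that for `r s - n` is `s - x₀`,
and the two conditions `r x₀ ≤ n` and `r (s - x₀) ≤ r s - n` say `r x₀ ≤ n` and `n ≤ r x₀`;
as `r ∤ n`, exactly one of them holds.
-/

/-- `R(m)` of the statement. -/
noncomputable def numReps (r s m : ℕ) : ℕ :=
  Nat.card {p : ℕ × ℕ // r * p.1 + s * p.2 = m}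

section

variable {r s m x₀ : ℕ}

lemma fst_eq_of_mul_add_mul_eq (hcop : r.Coprime s) (hm : m < r * s) (hx₀ : x₀ < s)
    (hmod : r * x₀ ≡ m [MOD s]) {x y : ℕ} (h : r * x + s * y = m) : x = x₀ := by
  have hxs : x < s := Nat.lt_of_mul_lt_mul_left (a := r) (by omega)
  have hx : r * x ≡ m [MOD s] := by
    rw [Nat.ModEq, ← h, Nat.add_mul_mod_self_left]
  exact Nat.ModEq.eq_of_lt_of_lt
    (Nat.ModEq.cancel_left_of_coprime (Nat.coprime_comm.mp hcop) (hx.trans hmod.symm)) hxs hx₀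

lemma numReps_eq_ite (hcop : r.Coprime s) (hm : m < r * s) (hx₀ : x₀ < s)
    (hmod : r * x₀ ≡ m [MOD s]) : numReps r s m = if r * x₀ ≤ m then 1 else 0 := by
  split_ifs with hle
  · obtain ⟨y, hy⟩ := (Nat.modEq_iff_dvd' hle).mp hmod
    refine Nat.card_eq_one_iff_exists.mpr ⟨⟨(x₀, y), show r * x₀ + s * y = m by omega⟩, ?_⟩
    rintro ⟨⟨x, y'⟩, h⟩
    dsimp only at h
    obtain rfl := fst_eq_of_mul_add_mul_eq hcop hm hx₀ hmod h
    have : s * y' = s * y := by omega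
    simpa using Nat.eq_of_mul_eq_mul_left (by omega) this
  · refine Nat.card_eq_zero.mpr (Or.inl ⟨fun ⟨⟨x, y⟩, h⟩ => hle ?_⟩)
    dsimp only at h
    obtain rfl := fst_eq_of_mul_add_mul_eq hcop hm hx₀ hmod h
    omega

end

theorem popoviciu_symmetry_general (r s : ℕ)
    (hcop : Nat.Coprime r s) (n : ℕ) (h1 : n < r * s)
    (hnr : ¬ r ∣ n) (hns : ¬ s ∣ n) :
    Nat.card {p : ℕ × ℕ // r * p.1 + s * p.2 = n} +
      Nat.card {p : ℕ × ℕ // r * p.1 + s * p.2 = r * s - n} = 1 := by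
  have hs : s ≠ 0 := by rintro rfl; simp at h1
  obtain ⟨x₀, hx₀s, hx₀⟩ := Nat.exists_mul_mod_eq_of_coprime n hcop hs
  have hn : n ≠ 0 := by rintro rfl; exact hns (dvd_zero s)
  have hx₀_pos : x₀ ≠ 0 := by
    rintro rfl
    exact hns (Nat.dvd_of_mod_eq_zero (by simpa using hx₀.symm))
  have hrx₀ : r * x₀ ≠ n := fun h => hnr ⟨x₀, h.symm⟩
  have hcompl : r * (s - x₀) ≡ r * s - n [MOD s] :=
    Nat.ModEq.add_right_cancel hx₀ (by
      rw [← Nat.mul_add, Nat.sub_add_cancel hx₀s.le, Nat.sub_add_cancel h1.le])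
  have hrx₀_le : r * x₀ ≤ r * s := Nat.mul_le_mul_left r hx₀s.le
  change numReps r s n + numReps r s (r * s - n) = 1
  rw [numReps_eq_ite hcop h1 hx₀s hx₀, numReps_eq_ite hcop (by omega) (by omega) hcompl,
    Nat.mul_sub]
  split_ifs <;> omega

theorem popoviciu_symmetry (r s : ℕ) (hr : 0 < r) (hs : 0 < s)
    (hcop : Nat.Coprime r s) (n : ℕ) (h0 : 0 < n) (h1 : n < r * s)
    (hnr : ¬ r ∣ n) (hns : ¬ s ∣ n) :
    Nat.card {p : ℕ × ℕ // r * p.1 + s * p.2 = n} +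
      Nat.card {p : ℕ × ℕ // r * p.1 + s * p.2 = r * s - n} = 1 :=
  popoviciu_symmetry_general r s hcop n h1 hnr hns
end

section
/- Let r, s be coprime positive integers with r > s ≥ 2. Then exactly half of the integers n in the interval [1, (r-1)(s-1)] are representable as n = r x + s y with nonnegative integers x, y; that is, the number of representable integers in that range is (r-1)(s-1)/2. -/
open Finset

namespace HalfRep

/-- canonical residue: the x in [0, s) with r*x ≡ n (mod s) -/
noncomputable def f (s r n : ℕ) : ℕ := ((n : ZMod s) * (r : ZMod s)⁻¹).val

lemma f_lt {r s : ℕ} (hs : 2 ≤ s) (n : ℕ) : f s r n < s := by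
  have : NeZero s := ⟨by omega⟩
  exact ZMod.val_lt _

lemma rfn_mod {r s : ℕ} (hs : 2 ≤ s) (hcop : Nat.Coprime r s) (n : ℕ) :
    r * f s r n ≡ n [MOD s] := by
  have : NeZero s := ⟨by omega⟩
  rw [← ZMod.natCast_eq_natCast_iff]
  push_cast [f, ZMod.natCast_val, ZMod.cast_id]
  rw [mul_comm (r : ZMod s), mul_assoc, ZMod.inv_mul_of_unit _
    ((ZMod.isUnit_iff_coprime r s).2 hcop)]
  ring

lemma rep_iff {r s : ℕ} (hs : 2 ≤ s) (hcop : Nat.Coprime r s) (n : ℕ) :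
    (∃ x y : ℕ, r * x + s * y = n) ↔ r * f s r n ≤ n := by
  have : NeZero s := ⟨by omega⟩
  constructor
  · rintro ⟨x, y, rfl⟩
    have hx : f s r (r * x + s * y) = x % s := by
      unfold f
      have h0 : ((r * x + s * y : ℕ) : ZMod s) = (r : ZMod s) * x := by push_cast; simp
      rw [h0, mul_comm (r : ZMod s), mul_assoc, ZMod.mul_inv_of_unit _
        ((ZMod.isUnit_iff_coprime r s).2 hcop), mul_one, ZMod.val_natCast]
    rw [hx]
    calc r * (x % s) ≤ r * x := Nat.mul_le_mul_left r (Nat.mod_le x s)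
      _ ≤ r * x + s * y := Nat.le_add_right _ _
  · intro h
    have hm := rfn_mod hs hcop n
    have hd : s ∣ n - r * f s r n := (Nat.modEq_iff_dvd' h).mp hm
    obtain ⟨y, hy⟩ := hd
    exact ⟨f s r n, y, by omega⟩

/-- if r * f n exceeds n, it exceeds by at least s -/
lemma gap {r s : ℕ} (hs : 2 ≤ s) (hcop : Nat.Coprime r s) (n : ℕ)
    (h : n < r * f s r n) : n + s ≤ r * f s r n := by
  have hd : s ∣ r * f s r n - n := (Nat.modEq_iff_dvd' (by omega)).mp (rfn_mod hs hcop n).symm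
  have := Nat.le_of_dvd (by omega) hd
  omega

/-- everything ≥ (r-1)(s-1) is representable -/
lemma rep_big {r s : ℕ} (hs : 2 ≤ s) (hrs : s < r) (hcop : Nat.Coprime r s) (n : ℕ)
    (h : r * (s - 1) ≤ n + s - 1) : ∃ x y : ℕ, r * x + s * y = n := by
  rw [rep_iff hs hcop]
  have h1 : f s r n < s := f_lt hs n
  have h2 : r * f s r n ≤ r * (s - 1) := Nat.mul_le_mul_left r (by omega)
  by_contra hc
  have := gap hs hcop n (by omega)
  omega

/-- symmetry: for n ≤ K := rs - r - s, n is representable iff K - n is not -/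
lemma symm_rep {r s : ℕ} (hs : 2 ≤ s) (hrs : s < r) (hcop : Nat.Coprime r s) (n : ℕ)
    (hn : n ≤ r * s - r - s) :
    (∃ x y : ℕ, r * x + s * y = n) ↔ ¬ ∃ x y : ℕ, r * x + s * y = (r * s - r - s - n) := by
  have : NeZero s := ⟨by omega⟩
  have hK : r * s - r - s + r + s = r * s := by
    have : r + s ≤ r * s := by nlinarith
    omega
  set K := r * s - r - s with hKdef
  have h1 : f s r n < s := f_lt hs n
  have hfb : f s r (K - n) = s - 1 - f s r n := by
    have hlt : s - 1 - f s r n < s := by omega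
    have key : ((K - n : ℕ) : ZMod s) * (r : ZMod s)⁻¹ = ((s - 1 - f s r n : ℕ) : ZMod s) := by
      have hKc : ((K : ℕ) : ZMod s) = -(r : ZMod s) := by
        have h0 := congrArg (Nat.cast : ℕ → ZMod s) hK
        push_cast at h0
        simp only [ZMod.natCast_self, add_zero, mul_zero] at h0
        linear_combination h0
      have hcast : ((K - n : ℕ) : ZMod s) = -(r : ZMod s) - n := by
        push_cast [Nat.cast_sub hn]
        rw [hKc]
      have hsm : ((s - 1 - f s r n : ℕ) : ZMod s) = -1 - (n : ZMod s) * (r : ZMod s)⁻¹ := by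
        push_cast [Nat.cast_sub (show f s r n ≤ s - 1 by omega),
          Nat.cast_sub (show 1 ≤ s by omega)]
        simp [f, ZMod.natCast_val, ZMod.cast_id, ZMod.natCast_self]
      rw [hcast, hsm, sub_mul, neg_mul]
      rw [ZMod.mul_inv_of_unit _ ((ZMod.isUnit_iff_coprime r s).2 hcop)]
    rw [f, key, ZMod.val_natCast_of_lt hlt]
  rw [rep_iff hs hcop, rep_iff hs hcop, hfb]
  have hB : r * (s - 1 - f s r n) + r * f s r n + r = r * s := by
    have h2 : (s - 1 - f s r n) + f s r n + 1 = s := by omega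
    calc r * (s - 1 - f s r n) + r * f s r n + r
        = r * ((s - 1 - f s r n) + f s r n + 1) := by ring
      _ = r * s := by rw [h2]
  constructor
  · intro hA
    generalize r * (s - 1 - f s r n) = B at *
    generalize r * f s r n = A at *
    generalize r * s = P at *
    omega
  · intro hB2
    by_contra hA
    have := gap hs hcop n (by omega)
    generalize r * (s - 1 - f s r n) = B at *
    generalize r * f s r n = A at *
    generalize r * s = P at *
    omega

end HalfRep

theorem half_representable (r s : ℕ) (hs : 2 ≤ s) (hrs : s < r)
    (hcop : Nat.Coprime r s) :
    {n : ℕ | 1 ≤ n ∧ n ≤ (r - 1) * (s - 1) ∧ ∃ x y : ℕ, r * x + s * y = n}.ncard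
      = (r - 1) * (s - 1) / 2 := by
  classical
  obtain ⟨r', rfl⟩ : ∃ r', r = r' + 1 := ⟨r - 1, by omega⟩
  obtain ⟨s', rfl⟩ : ∃ s', s = s' + 1 := ⟨s - 1, by omega⟩
  set r := r' + 1
  set s := s' + 1
  have hF : (r - 1) * (s - 1) = r' * s' := by simp [r, s]
  set K := r * s - r - s with hKdef
  have hK : K + r + s = r * s := by
    have : r + s ≤ r * s := by nlinarith
    omega
  have hKF : K + 1 = r' * s' := by
    have : r * s = r' * s' + r' + s' + 1 := by ring
    omega
  rw [hF]
  set rep : ℕ → Prop := fun n => ∃ x y : ℕ, r * x + s * y = n with hrep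
  set T : Finset ℕ := (Finset.range (K + 1)).filter rep with hT
  set T' : Finset ℕ := (Finset.range (K + 1)).filter (fun n => ¬ rep n) with hT'
  have hcards : T.card + T'.card = K + 1 := by
    rw [hT, hT', Finset.card_filter_add_card_filter_not]
    simp
  have hbij : T.card = T'.card := by
    apply Finset.card_bij (fun n _ => K - n)
    · intro a ha
      simp only [hT, hT', Finset.mem_filter, Finset.mem_range] at ha ⊢
      refine ⟨by omega, ?_⟩
      show ¬ rep (K - a)
      rw [hrep]
      simp only
      rw [← HalfRep.symm_rep hs hrs hcop a (by omega)]
      exact ha.2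
    · intro a ha b hb h
      simp only [hT, Finset.mem_filter, Finset.mem_range] at ha hb
      omega
    · intro b hb
      simp only [hT, hT', Finset.mem_filter, Finset.mem_range] at hb ⊢
      refine ⟨K - b, ⟨by omega, ?_⟩, by omega⟩
      show rep (K - b)
      rw [hrep]
      simp only
      rw [HalfRep.symm_rep hs hrs hcop (K - b) (by omega)]
      have hb2 : K - (K - b) = b := by omega
      rw [hb2]
      exact hb.2
  set U : Finset ℕ := (Finset.range (r' * s' + 1)).filter
    (fun n => 1 ≤ n ∧ n ≤ r' * s' ∧ rep n) with hU
  have hSU : {n : ℕ | 1 ≤ n ∧ n ≤ r' * s' ∧ ∃ x y : ℕ, r * x + s * y = n} = ↑U := by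
    ext n
    simp only [hU, Set.mem_setOf_eq, Finset.coe_filter, Finset.mem_range]
    constructor
    · rintro ⟨h1, h2, h3⟩; exact ⟨by omega, h1, h2, h3⟩
    · rintro ⟨_, h⟩; exact h
  rw [hSU, Set.ncard_coe_finset]
  have hrepF : rep (K + 1) := by
    rw [hrep]
    apply HalfRep.rep_big hs hrs hcop
    have h3 : r * (s - 1) = r * s' := by simp [s]
    rw [h3]
    have h4 : r * s = r * s' + r := by ring
    omega
  have hUT : U = insert (K + 1) (T.erase 0) := by
    ext n
    simp only [hU, hT, Finset.mem_insert, Finset.mem_erase, Finset.mem_filter, Finset.mem_range]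
    constructor
    · rintro ⟨h1, _, h2, h3⟩
      rcases eq_or_ne n (K + 1) with rfl | hne
      · exact Or.inl rfl
      · exact Or.inr ⟨by omega, by omega, h3⟩
    · rintro (rfl | ⟨h1, h2, h3⟩)
      · exact ⟨by omega, by omega, by omega, hrepF⟩
      · exact ⟨by omega, by omega, by omega, h3⟩
  have h0T : 0 ∈ T := by
    simp only [hT, Finset.mem_filter, Finset.mem_range]
    exact ⟨by omega, 0, 0, by simp⟩
  have hnotmem : K + 1 ∉ T.erase 0 := by
    simp only [hT, Finset.mem_erase, Finset.mem_filter, Finset.mem_range]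
    omega
  have hcardU : U.card = T.card := by
    rw [hUT, Finset.card_insert_of_notMem hnotmem, Finset.card_erase_of_mem h0T]
    have : 1 ≤ T.card := Finset.card_pos.mpr ⟨0, h0T⟩
    omega
  rw [hcardU]
  omega
end

section
/- For n ≥ 2, if a, b ∈ {1, ..., n} satisfy a b ≡ 1 (mod n), then |a - b| ≤ n - 2√(n-1), hence |a - b| ≤ ⌊n - 2√(n-1)⌋. -/
lemma key_half (n a b : ℕ) (hn : 2 ≤ n) (ha : 1 ≤ a) (ha' : a ≤ n)
    (hb : 1 ≤ b) (hba : b ≤ a) (h : a * b ≡ 1 [MOD n]) :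
    (a : ℝ) - (b : ℝ) ≤ (n : ℝ) - 2 * Real.sqrt (n - 1) := by
  -- (n - a) * b ≡ -1 mod n in ℤ
  have hz : ((a : ℤ) * b) ≡ 1 [ZMOD (n : ℤ)] := Int.natCast_modEq_iff.mpr h
  have hdvd : (n : ℤ) ∣ ((n : ℤ) - a) * b + 1 := by
    have h1 : (n : ℤ) ∣ (a : ℤ) * b - 1 := Int.ModEq.dvd hz.symm
    have : ((n : ℤ) - a) * b + 1 = (n : ℤ) * b - ((a : ℤ) * b - 1) := by ring
    rw [this]
    exact dvd_sub (Dvd.intro _ rfl) h1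
  obtain ⟨m, hm⟩ := hdvd
  have hpos : 0 < ((n : ℤ) - a) * b + 1 := by
    have : 0 ≤ ((n : ℤ) - a) * b := by
      apply mul_nonneg <;> [skip; positivity]
      omega
    omega
  have hm1 : 1 ≤ m := by
    by_contra hc
    push_neg at hc
    have : m ≤ 0 := by omega
    nlinarith [hm, hpos, (by exact_mod_cast hn : (2:ℤ) ≤ n)]
  have hkey : (n : ℤ) - 1 ≤ ((n : ℤ) - a) * b := by nlinarith [hm, (by exact_mod_cast hn : (2:ℤ) ≤ n)]
  -- move to ℝ
  have hkeyR : (n : ℝ) - 1 ≤ ((n : ℝ) - a) * b := by exact_mod_cast hkey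
  set s := Real.sqrt ((n : ℝ) - 1) with hs
  have hn1 : (0:ℝ) ≤ (n : ℝ) - 1 := by
    have : (1:ℝ) ≤ n := by exact_mod_cast (by omega : 1 ≤ n)
    linarith
  have hs2 : s ^ 2 = (n : ℝ) - 1 := Real.sq_sqrt hn1
  have hs0 : 0 ≤ s := Real.sqrt_nonneg _
  have hna : (0:ℝ) ≤ (n : ℝ) - a := by
    have : (a:ℝ) ≤ n := by exact_mod_cast ha'
    linarith
  have hbR : (1:ℝ) ≤ b := by exact_mod_cast hb
  nlinarith [sq_nonneg ((n : ℝ) - a - b), sq_nonneg ((n : ℝ) - a + b - 2 * s),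
    sq_nonneg ((n : ℝ) - a + b + 2 * s)]

theorem inverse_distance_bound (n : ℕ) (hn : 2 ≤ n) (a b : ℕ)
    (ha : 1 ≤ a) (ha' : a ≤ n) (hb : 1 ≤ b) (hb' : b ≤ n)
    (h : a * b ≡ 1 [MOD n]) :
    |(a : ℝ) - (b : ℝ)| ≤ (n : ℝ) - 2 * Real.sqrt (n - 1) ∧
    (((a : ℤ) - (b : ℤ)).natAbs : ℤ) ≤ ⌊(n : ℝ) - 2 * Real.sqrt (n - 1)⌋ := by
  have habs : |(a : ℝ) - (b : ℝ)| ≤ (n : ℝ) - 2 * Real.sqrt (n - 1) := by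
    rcases le_total b a with hba | hab
    · rw [abs_of_nonneg (by exact_mod_cast sub_nonneg.mpr (by exact_mod_cast hba : (b:ℝ) ≤ a))]
      exact key_half n a b hn ha ha' hb hba h
    · rw [abs_of_nonpos (by exact_mod_cast sub_nonpos.mpr (by exact_mod_cast hab : (a:ℝ) ≤ b)), neg_sub]
      exact key_half n b a hn hb hb' ha hab (by rwa [Nat.mul_comm] at h)
  refine ⟨habs, ?_⟩
  rw [Int.le_floor]
  have : ((((a : ℤ) - (b : ℤ)).natAbs : ℤ) : ℝ) = |(a : ℝ) - (b : ℝ)| := by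
    push_cast [Nat.cast_natAbs]
    norm_num
  rw [this]
  exact habs
end
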